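/- Let G be a weighted undirected graph with nonnegative weights, M ⊆ V a skeleton set with the property that for any u,v with hop(u,v) ≥ h, some shortest u-v path has a node of M among its first h vertices and a node of M among its last h vertices. Let s be a source with representative r_s ∈ M satisfying d^h(r_s, s) = min over M ∩ N^h(s) of distance, and suppose d̃^S(v,w) is an (α,β)-approximation of d(v,w) for all v,w ∈ M. Then for any node u with hop(u,s) > η·h, the value d̃(u,s) := min{ d^{ηh}(u,s), min_{v' ∈ M ∩ N^h(u)} ( d^h(u,v') + d̃^S(v', r_s) + d^h(r_s,s) ) } satisfies d(u,s) ≤ d̃(u,s) ≤ (2α+1)·d(u,s) + β. -/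

import Mathlib

/-!
Take a weighted shortest `u`–`s` path `p` given by the skeleton property, a skeleton node
`v = p_k` among its first `h` vertices and a skeleton node `r = p_{k'}` among its last `h`
vertices, with `k ≤ k'`. Write `a`, `b`, `c` for the weights of `p` up to `v`, of `p` from `v`
and of `p` from `r`, so `a + b = d(u,s)` and `c ≤ b`. The candidate through `v` is at most
`a + (α (b + c) + β) + c`: the first and last terms are `h`-hop walks along `p` (the latter by
minimality of `r_s`), and `d(v,r_s) ≤ d(v,s) + d(s,r_s) ≤ b + c`. This is at most
`(2α + 1) d(u,s) + β`. The lower bound is the triangle inequality.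
-/

open scoped ENNReal

/-- Weight of a walk: sum of the weights of its edges. -/
noncomputable def walkWeight {V : Type} {G : SimpleGraph V} (w : Sym2 V → ℝ≥0∞)
    {a b : V} (p : G.Walk a b) : ℝ≥0∞ :=
  (p.edges.map w).sum

/-- Weighted shortest-path distance: infimum of walk weights (`⊤` if disconnected). -/
noncomputable def wdist {V : Type} (G : SimpleGraph V) (w : Sym2 V → ℝ≥0∞)
    (a b : V) : ℝ≥0∞ :=
  ⨅ p : G.Walk a b, walkWeight w p

/-- `h`-hop-limited weighted distance: infimum of weights over walks with at most
`h` edges (`⊤` if there is no such walk). -/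
noncomputable def hdist {V : Type} (G : SimpleGraph V) (w : Sym2 V → ℝ≥0∞)
    (h : ℕ) (a b : V) : ℝ≥0∞ :=
  ⨅ p : {p : G.Walk a b // p.length ≤ h}, walkWeight w p.1

open SimpleGraph

section

variable {V : Type} {G : SimpleGraph V} (w : Sym2 V → ℝ≥0∞)

lemma walkWeight_append {a b c : V} (p : G.Walk a b) (q : G.Walk b c) :
    walkWeight w (p.append q) = walkWeight w p + walkWeight w q := by
  simp [walkWeight, Walk.edges_append]

lemma walkWeight_reverse {a b : V} (p : G.Walk a b) :
    walkWeight w p.reverse = walkWeight w p := by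
  simp [walkWeight, Walk.edges_reverse, List.sum_reverse]

lemma walkWeight_take_add_drop {a b : V} (p : G.Walk a b) (n : ℕ) :
    walkWeight w (p.take n) + walkWeight w (p.drop n) = walkWeight w p := by
  rw [← walkWeight_append, p.append_take_drop_eq]

lemma walkWeight_drop_antitone {a b : V} (p : G.Walk a b) {m n : ℕ} (hmn : m ≤ n) :
    walkWeight w (p.drop n) ≤ walkWeight w (p.drop m) := by
  simp only [walkWeight, Walk.edges_drop]
  exact (List.Sublist.map w (p.edges.drop_sublist_drop_left hmn)).sum_le_sum fun _ _ => bot_le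

lemma wdist_le_walkWeight {a b : V} (p : G.Walk a b) : wdist G w a b ≤ walkWeight w p :=
  iInf_le _ p

lemma hdist_le_walkWeight {h : ℕ} {a b : V} (p : G.Walk a b) (hp : p.length ≤ h) :
    hdist G w h a b ≤ walkWeight w p :=
  iInf_le (fun q : {q : G.Walk a b // q.length ≤ h} => walkWeight w q.1) ⟨p, hp⟩

lemma wdist_le_hdist (h : ℕ) (a b : V) : wdist G w a b ≤ hdist G w h a b :=
  le_iInf fun p => wdist_le_walkWeight w p.1

lemma wdist_comm (a b : V) : wdist G w a b = wdist G w b a := by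
  have key : ∀ x y : V, wdist G w x y ≤ wdist G w y x := fun x y =>
    le_iInf fun p => (wdist_le_walkWeight w p.reverse).trans_eq (walkWeight_reverse w p)
  exact le_antisymm (key a b) (key b a)

lemma wdist_triangle (a b c : V) : wdist G w a c ≤ wdist G w a b + wdist G w b c :=
  calc wdist G w a c ≤ ⨅ (p : G.Walk a b) (q : G.Walk b c), walkWeight w p + walkWeight w q :=
        le_iInf₂ fun p q =>
          (wdist_le_walkWeight w (p.append q)).trans_eq (walkWeight_append w p q)
    _ = wdist G w a b + wdist G w b c := by
        rw [wdist, wdist, ENNReal.iInf_add]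
        exact iInf_congr fun p => ENNReal.add_iInf.symm

lemma wdist_le_hdist_add_wdist_add_hdist (h₁ h₂ : ℕ) (a b c d : V) :
    wdist G w a d ≤ hdist G w h₁ a b + wdist G w b c + hdist G w h₂ c d :=
  calc wdist G w a d ≤ wdist G w a b + wdist G w b c + wdist G w c d :=
        (wdist_triangle w a c d).trans (by gcongr; exact wdist_triangle w a b c)
    _ ≤ hdist G w h₁ a b + wdist G w b c + hdist G w h₂ c d := by
        gcongr <;> exact wdist_le_hdist w _ _ _

lemma hdist_add_add_hdist_le_of_shortest {u s r : V} (p : G.Walk u s)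
    (hp : walkWeight w p = wdist G w u s) {h h' k k' : ℕ} (hk : k ≤ h) (hkk' : k ≤ k')
    {α β δ : ℝ≥0∞} (hδ : δ ≤ α * wdist G w (p.getVert k) r + β)
    (hr : hdist G w h' r s ≤ walkWeight w (p.drop k')) :
    hdist G w h u (p.getVert k) + δ + hdist G w h' r s ≤ (2 * α + 1) * wdist G w u s + β := by
  set a := walkWeight w (p.take k)
  set b := walkWeight w (p.drop k)
  set c := walkWeight w (p.drop k')
  have hcb : c ≤ b := walkWeight_drop_antitone w p hkk'
  have hvr : wdist G w (p.getVert k) r ≤ b + c :=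
    calc wdist G w (p.getVert k) r ≤ wdist G w (p.getVert k) s + wdist G w s r :=
          wdist_triangle w _ s r
      _ ≤ b + c := by
          gcongr
          · exact wdist_le_walkWeight w _
          · exact (wdist_comm w s r).trans_le ((wdist_le_hdist w h' r s).trans hr)
  have hua : hdist G w h u (p.getVert k) ≤ a :=
    hdist_le_walkWeight w _ ((p.take_length k).trans_le ((min_le_left _ _).trans hk))
  calc hdist G w h u (p.getVert k) + δ + hdist G w h' r s
      ≤ a + (α * (b + b) + β) + b := by
        gcongr
        · exact hδ.trans (by gcongr; exact hvr.trans (by gcongr))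
        · exact hr.trans hcb
    _ = (a + b) + 2 * α * b + β := by ring
    _ ≤ (a + b) + 2 * α * (a + b) + β := by gcongr; exact le_add_self
    _ = (2 * α + 1) * wdist G w u s + β := by
        rw [walkWeight_take_add_drop, hp]; ring

end

theorem stmt_14_general {V : Type} (G : SimpleGraph V) (w : Sym2 V → ℝ≥0∞)
    (M : Set V) (h η : ℕ) (hη : 1 ≤ η)
    (hskel : ∀ a b : V, h ≤ G.dist a b →
      ∃ p : G.Walk a b, walkWeight w p = wdist G w a b ∧
        (∃ k < h, p.getVert k ∈ M) ∧
        (∃ k, k ≤ p.length ∧ p.length < k + h ∧ p.getVert k ∈ M))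
    (α β : ℝ≥0∞)
    (dS : V → V → ℝ≥0∞)
    (hdS : ∀ a ∈ M, ∀ b ∈ M, wdist G w a b ≤ dS a b ∧ dS a b ≤ α * wdist G w a b + β)
    (s rs : V)
    (hrsM : rs ∈ M)
    (hrsmin : ∀ v ∈ M, G.Reachable s v → G.dist s v ≤ h →
      hdist G w h rs s ≤ hdist G w h v s)
    (u : V) (hu : η * h < G.dist u s) :
    let est : ℝ≥0∞ := min (hdist G w (η * h) u s)
      (⨅ v : {v : V // v ∈ M ∧ G.Reachable u v ∧ G.dist u v ≤ h},
        hdist G w h u v + dS v rs + hdist G w h rs s)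
    wdist G w u s ≤ est ∧ est ≤ (2 * α + 1) * wdist G w u s + β := by
  obtain ⟨p, hp, ⟨k₁, hk₁, hk₁M⟩, ⟨k₂, -, hk₂, hk₂M⟩⟩ :=
    hskel u s ((Nat.le_mul_of_pos_left h hη).trans hu.le)
  refine ⟨le_min (wdist_le_hdist w _ u s) (le_iInf fun ⟨v, hvM, _⟩ => ?_), ?_⟩
  · exact (wdist_le_hdist_add_wdist_add_hdist w h h u v rs s).trans
      (by gcongr; exact (hdS v hvM rs hrsM).1)
  -- Taking the earlier skeleton node keeps the suffix from `k₂` inside the suffix from `k`.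
  set k := min k₁ k₂
  have hkM : p.getVert k ∈ M := by
    rcases min_choice k₁ k₂ with hm | hm <;> simpa only [k, hm]
  have hkh : k ≤ h := (min_le_left _ _).trans hk₁.le
  have hsuffix : (p.drop k₂).length ≤ h := by rw [p.drop_length]; omega
  have hrs : hdist G w h rs s ≤ walkWeight w (p.drop k₂) :=
    (hrsmin _ hk₂M (p.drop k₂).reverse.reachable
      (by rw [dist_comm]; exact (dist_le _).trans hsuffix)).trans
      (hdist_le_walkWeight w _ hsuffix)
  refine (min_le_right _ _).trans ((iInf_le _ ⟨p.getVert k, hkM, (p.take k).reachable,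
    (dist_le _).trans ((p.take_length k).trans_le ((min_le_left _ _).trans hkh))⟩).trans ?_)
  exact hdist_add_add_hdist_le_of_shortest w p hp hkh (min_le_right _ _) (hdS _ hkM rs hrsM).2 hrs

/-- weighted multi-source approximation step: with skeleton set `M`
(some weighted shortest path between nodes at hop distance ≥ h has a node of `M`
among its first `h` and among its last `h` vertices), a representative `r_s ∈ M`
within `h` hops of `s` minimizing `d^h(·,s)` over `M ∩ N^h(s)`, and an
`(α,β)`-approximation `d̃^S` of skeleton distances, for any node `u` with
`hop(u,s) > η·h` the estimate
`d̃(u,s) = min( d^{ηh}(u,s), min_{v' ∈ M ∩ N^h(u)} d^h(u,v') + d̃^S(v',r_s) + d^h(r_s,s) )`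
satisfies `d(u,s) ≤ d̃(u,s) ≤ (2α+1)·d(u,s) + β`. -/
theorem stmt_14 {V : Type} [Fintype V] (G : SimpleGraph V) (w : Sym2 V → ℝ≥0∞)
    (M : Set V) (h η : ℕ) (hh : 1 ≤ h) (hη : 1 ≤ η)
    (hskel : ∀ a b : V, h ≤ G.dist a b →
      ∃ p : G.Walk a b, walkWeight w p = wdist G w a b ∧
        (∃ k < h, p.getVert k ∈ M) ∧
        (∃ k, k ≤ p.length ∧ p.length < k + h ∧ p.getVert k ∈ M))
    (α β : ℝ≥0∞) (hα : 1 ≤ α)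
    (dS : V → V → ℝ≥0∞)
    (hdS : ∀ a ∈ M, ∀ b ∈ M, wdist G w a b ≤ dS a b ∧ dS a b ≤ α * wdist G w a b + β)
    (s rs : V)
    (hrsM : rs ∈ M) (hrsN : G.Reachable s rs ∧ G.dist s rs ≤ h)
    (hrsmin : ∀ v ∈ M, G.Reachable s v → G.dist s v ≤ h →
      hdist G w h rs s ≤ hdist G w h v s)
    (u : V) (hu : η * h < G.dist u s) :
    let est : ℝ≥0∞ := min (hdist G w (η * h) u s)
      (⨅ v : {v : V // v ∈ M ∧ G.Reachable u v ∧ G.dist u v ≤ h},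
        hdist G w h u v + dS v rs + hdist G w h rs s)
    wdist G w u s ≤ est ∧ est ≤ (2 * α + 1) * wdist G w u s + β :=
  stmt_14_general G w M h η hη hskel α β dS hdS s rs hrsM hrsmin u hu
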